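/- Let P and Q be probability measures on a measurable space X, dominated by a σ-finite measure μ. Then for every n ≥ 1 and every test φ : Xⁿ → {0,1}, Pⁿ(φ = 1) + Qⁿ(φ = 0) ≥ 1 − √(2n) · h(P, Q). -/

import Mathlib

open MeasureTheory

lemma lintegral_pi_prod {X : Type*} [MeasurableSpace X] (μ : Measure X) [SigmaFinite μ]
    : ∀ {n : ℕ} (f : Fin n → X → ENNReal), (∀ i, Measurable (f i)) →
    ∫⁻ x : Fin n → X, ∏ i, f i (x i) ∂(Measure.pi fun _ => μ) = ∏ i, ∫⁻ y, f i y ∂μ := by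
  intro n
  induction n with
  | zero =>
    intro f hf
    simp [Measure.pi_univ]
  | succ n ih =>
    intro f hf
    have hmeas : Measurable fun x : Fin (n+1) → X => ∏ i, f i (x i) :=
      Finset.measurable_prod _ fun i _ => (hf i).comp (measurable_pi_apply i)
    have hmp := (measurePreserving_piFinSuccAbove (fun _ : Fin (n+1) => μ) 0).symm
    rw [← hmp.lintegral_comp hmeas]
    have hcomp : ∀ y : X × (Fin n → X),
        (∏ i, f i (((MeasurableEquiv.piFinSuccAbove (fun _ : Fin (n+1) => X) 0).symm y) i))
          = f 0 y.1 * ∏ i : Fin n, f i.succ (y.2 i) := by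
      intro y
      rw [MeasurableEquiv.piFinSuccAbove_symm_apply]
      simp [Fin.prod_univ_succ, Fin.insertNth_zero, Fin.zero_succAbove]
    simp only [Function.comp_def, hcomp]
    rw [lintegral_prod_mul (f := f 0) (g := fun z : Fin n → X => ∏ i, f i.succ (z i))
      (hf 0).aemeasurable
      (Finset.measurable_prod _ fun i _ => (hf i.succ).comp (measurable_pi_apply i)).aemeasurable,
      ih (fun i => f i.succ) (fun i => hf i.succ), Fin.prod_univ_succ]

lemma pi_eq_withDensity {X : Type*} [MeasurableSpace X] (μ : Measure X) [SigmaFinite μ]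
    (P : Measure X) [IsProbabilityMeasure P] (hPμ : P ≪ μ) (n : ℕ) :
    Measure.pi (fun _ : Fin n => P)
      = (Measure.pi fun _ : Fin n => μ).withDensity (fun x => ∏ i, P.rnDeriv μ (x i)) := by
  refine Measure.pi_eq fun s hs => ?_
  set f := P.rnDeriv μ with hfdef
  have hfm : Measurable f := Measure.measurable_rnDeriv P μ
  rw [withDensity_apply _ (MeasurableSet.univ_pi hs),
    ← lintegral_indicator (MeasurableSet.univ_pi hs)]
  have hind : ∀ x : Fin n → X,
      (Set.univ.pi s).indicator (fun x => ∏ i, f (x i)) x = ∏ i, (s i).indicator f (x i) := by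
    intro x
    by_cases hx : x ∈ Set.univ.pi s
    · rw [Set.indicator_of_mem hx]
      exact Finset.prod_congr rfl fun i _ => (Set.indicator_of_mem (hx i trivial) f).symm
    · rw [Set.indicator_of_notMem hx]
      simp only [Set.mem_pi, Set.mem_univ, forall_true_left, not_forall] at hx
      obtain ⟨i, hi⟩ := hx
      exact (Finset.prod_eq_zero (Finset.mem_univ i) (Set.indicator_of_notMem hi f)).symm
  simp only [hind]
  rw [lintegral_pi_prod μ (fun i => (s i).indicator f) (fun i => hfm.indicator (hs i))]
  refine Finset.prod_congr rfl fun i _ => ?_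
  rw [lintegral_indicator (hs i), Measure.setLIntegral_rnDeriv hPμ]

lemma integral_mul_le_sqrt {Y : Type*} [MeasurableSpace Y] {ν : Measure Y} {F G : Y → ℝ}
    (hFm : AEStronglyMeasurable F ν) (hGm : AEStronglyMeasurable G ν)
    (hF0 : ∀ y, 0 ≤ F y) (hG0 : ∀ y, 0 ≤ G y)
    (hF2 : Integrable (fun y => F y ^ 2) ν) (hG2 : Integrable (fun y => G y ^ 2) ν) :
    ∫ y, F y * G y ∂ν ≤ Real.sqrt (∫ y, F y ^ 2 ∂ν) * Real.sqrt (∫ y, G y ^ 2 ∂ν) := by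
  have hpq : Real.HolderConjugate 2 2 := ⟨by norm_num, by norm_num, by norm_num⟩
  have h2 : (ENNReal.ofReal 2) = 2 := by norm_num
  have hF : MemLp F (ENNReal.ofReal 2) ν := by
    rw [h2]; exact (memLp_two_iff_integrable_sq hFm).2 hF2
  have hG : MemLp G (ENNReal.ofReal 2) ν := by
    rw [h2]; exact (memLp_two_iff_integrable_sq hGm).2 hG2
  have h := integral_mul_le_Lp_mul_Lq_of_nonneg hpq
    (Filter.Eventually.of_forall hF0) (Filter.Eventually.of_forall hG0) hF hG
  calc ∫ y, F y * G y ∂ν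
      ≤ (∫ a, F a ^ (2:ℝ) ∂ν) ^ ((1:ℝ)/2) * (∫ a, G a ^ (2:ℝ) ∂ν) ^ ((1:ℝ)/2) := h
    _ = Real.sqrt (∫ y, F y ^ 2 ∂ν) * Real.sqrt (∫ y, G y ^ 2 ∂ν) := by
        rw [Real.sqrt_eq_rpow, Real.sqrt_eq_rpow]
        norm_num [Real.rpow_two]

lemma prod_integrable_and_integral {X : Type*} [MeasurableSpace X] (μ : Measure X)
    [SigmaFinite μ] (n : ℕ) (u : X → ℝ) (hu : Integrable u μ) :
    Integrable (fun x : Fin n → X => ∏ i, u (x i)) (Measure.pi fun _ => μ) ∧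
    ∫ x : Fin n → X, ∏ i, u (x i) ∂(Measure.pi fun _ => μ) = (∫ y, u y ∂μ) ^ n := by
  letI : MeasureSpace X := ⟨μ⟩
  have hvol : (Measure.pi fun _ : Fin n => μ) = (volume : Measure (Fin n → X)) :=
    (volume_pi).symm
  constructor
  · rw [hvol]
    exact Integrable.fin_nat_prod (𝕜 := ℝ) (f := fun _ => u) (fun _ => hu)
  · rw [integral_fin_nat_prod_eq_prod (f := fun _ => u) (μ := fun _ => μ)]
    simp only [Finset.prod_const, Finset.card_univ, Fintype.card_fin]


/-- Hellinger distance between measures `P, Q` dominated by `μ`,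
computed from their densities (Radon–Nikodym derivatives) with respect
to `μ`: `h(P,Q) = √((1/2) ∫ (√(dP/dμ) − √(dQ/dμ))² dμ)`. -/
noncomputable def hellingerDist' {X : Type*} [MeasurableSpace X]
    (μ P Q : Measure X) : ℝ :=
  Real.sqrt ((1 / 2) * ∫ x,
    (Real.sqrt ((P.rnDeriv μ x).toReal) - Real.sqrt ((Q.rnDeriv μ x).toReal)) ^ 2 ∂μ)

/-- **Testing lower bound in terms of the Hellinger distance.**
For probability measures `P, Q` dominated by a σ-finite measure `μ`, every
test `φ : Xⁿ → {0,1}` satisfies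
`Pⁿ(φ = 1) + Qⁿ(φ = 0) ≥ 1 − √(2n)·h(P,Q)`. -/
theorem test_errors_ge_one_sub_sqrt_two_n_hellinger
    {X : Type*} [MeasurableSpace X] (μ : Measure X) [SigmaFinite μ]
    (P Q : Measure X) [IsProbabilityMeasure P] [IsProbabilityMeasure Q]
    (hPμ : P ≪ μ) (hQμ : Q ≪ μ)
    (n : ℕ) (hn : 1 ≤ n) (φ : (Fin n → X) → Bool) (hφ : Measurable φ) :
    1 - Real.sqrt (2 * n) * hellingerDist' μ P Q ≤
      ((Measure.pi fun _ : Fin n => P) {x | φ x = true}).toReal +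
      ((Measure.pi fun _ : Fin n => Q) {x | φ x = false}).toReal := by
  classical
  -- one-dimensional densities
  have hfm : Measurable (P.rnDeriv μ) := Measure.measurable_rnDeriv P μ
  have hgm : Measurable (Q.rnDeriv μ) := Measure.measurable_rnDeriv Q μ
  set p : X → ℝ := fun x => (P.rnDeriv μ x).toReal with hpdef
  set q : X → ℝ := fun x => (Q.rnDeriv μ x).toReal with hqdef
  have hpm : Measurable p := hfm.ennreal_toReal
  have hqm : Measurable q := hgm.ennreal_toReal
  have hp0 : ∀ x, 0 ≤ p x := fun x => ENNReal.toReal_nonneg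
  have hq0 : ∀ x, 0 ≤ q x := fun x => ENNReal.toReal_nonneg
  have hip : Integrable p μ := Measure.integrable_toReal_rnDeriv
  have hiq : Integrable q μ := Measure.integrable_toReal_rnDeriv
  have hintp : ∫ x, p x ∂μ = 1 := by
    rw [hpdef, Measure.integral_toReal_rnDeriv hPμ]; simp
  have hintq : ∫ x, q x ∂μ = 1 := by
    rw [hqdef, Measure.integral_toReal_rnDeriv hQμ]; simp
  set r : X → ℝ := fun x => Real.sqrt (p x) * Real.sqrt (q x) with hrdef
  have hrm : Measurable r :=
    (Real.continuous_sqrt.measurable.comp hpm).mul (Real.continuous_sqrt.measurable.comp hqm)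
  have hr0 : ∀ x, 0 ≤ r x := fun x => mul_nonneg (Real.sqrt_nonneg _) (Real.sqrt_nonneg _)
  have hrle : ∀ x, r x ≤ (p x + q x) / 2 := by
    intro x
    show Real.sqrt (p x) * Real.sqrt (q x) ≤ (p x + q x) / 2
    nlinarith [Real.sq_sqrt (hp0 x), Real.sq_sqrt (hq0 x), Real.sqrt_nonneg (p x),
      Real.sqrt_nonneg (q x), sq_nonneg (Real.sqrt (p x) - Real.sqrt (q x))]
  have hir : Integrable r μ := by
    refine Integrable.mono ((hip.add hiq).div_const 2) hrm.aestronglyMeasurable ?_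
    refine Filter.Eventually.of_forall fun x => ?_
    rw [Real.norm_of_nonneg (hr0 x)]
    exact (hrle x).trans (le_abs_self _)
  set ρ : ℝ := ∫ x, r x ∂μ with hρdef
  have hρ0 : 0 ≤ ρ := integral_nonneg hr0
  have hsqp : (fun x => Real.sqrt (p x) ^ 2) = p := funext fun x => Real.sq_sqrt (hp0 x)
  have hsqq : (fun x => Real.sqrt (q x) ^ 2) = q := funext fun x => Real.sq_sqrt (hq0 x)
  have hρ1 : ρ ≤ 1 := by
    have h := integral_mul_le_sqrt (ν := μ)
      (F := fun x => Real.sqrt (p x)) (G := fun x => Real.sqrt (q x))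
      (Real.continuous_sqrt.measurable.comp hpm).aestronglyMeasurable
      (Real.continuous_sqrt.measurable.comp hqm).aestronglyMeasurable
      (fun x => Real.sqrt_nonneg _) (fun x => Real.sqrt_nonneg _)
      (by rw [hsqp]; exact hip) (by rw [hsqq]; exact hiq)
    rw [hsqp, hsqq, hintp, hintq, Real.sqrt_one, mul_one] at h
    exact h
  have hρn1 : ρ ^ n ≤ 1 := pow_le_one₀ hρ0 hρ1
  have hρn0 : 0 ≤ ρ ^ n := pow_nonneg hρ0 n
  -- Hellinger distance equals √(1 - ρ)
  have hhell : hellingerDist' μ P Q = Real.sqrt (1 - ρ) := by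
    have hexp : ∀ x, (Real.sqrt (p x) - Real.sqrt (q x)) ^ 2 = p x + q x - 2 * r x := by
      intro x
      rw [sub_sq, Real.sq_sqrt (hp0 x), Real.sq_sqrt (hq0 x), hrdef]
      ring
    unfold hellingerDist'
    have hint2 : ∫ x, (p x + q x - 2 * r x) ∂μ = 2 - 2 * ρ := by
      have h12 : Integrable (fun x => p x + q x) μ := hip.add hiq
      have h22 : Integrable (fun x => 2 * r x) μ := hir.const_mul 2
      rw [integral_sub h12 h22,
        integral_add hip hiq, hintp, hintq, integral_const_mul, ← hρdef]
      ring
    rw [show (∫ x, (Real.sqrt ((P.rnDeriv μ x).toReal)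
        - Real.sqrt ((Q.rnDeriv μ x).toReal)) ^ 2 ∂μ) = ∫ x, (p x + q x - 2 * r x) ∂μ from
      integral_congr_ae (Filter.Eventually.of_forall fun x => hexp x), hint2]
    congr 1
    ring
  -- product space setup
  set N : Measure (Fin n → X) := Measure.pi fun _ => μ with hNdef
  set PP : Measure (Fin n → X) := Measure.pi fun _ => P with hPPdef
  set QQ : Measure (Fin n → X) := Measure.pi fun _ => Q with hQQdef
  have hPP : PP = N.withDensity (fun x => ∏ i, P.rnDeriv μ (x i)) :=
    pi_eq_withDensity μ P hPμ n
  have hQQ : QQ = N.withDensity (fun x => ∏ i, Q.rnDeriv μ (x i)) :=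
    pi_eq_withDensity μ Q hQμ n
  have hfNm : Measurable (fun x : Fin n → X => ∏ i, P.rnDeriv μ (x i)) :=
    Finset.measurable_prod _ fun i _ => hfm.comp (measurable_pi_apply i)
  have hgNm : Measurable (fun x : Fin n → X => ∏ i, Q.rnDeriv μ (x i)) :=
    Finset.measurable_prod _ fun i _ => hgm.comp (measurable_pi_apply i)
  have hPPN : PP ≪ N := hPP ▸ withDensity_absolutelyContinuous N _
  have hQQN : QQ ≪ N := hQQ ▸ withDensity_absolutelyContinuous N _
  set pN : (Fin n → X) → ℝ := fun x => ∏ i, p (x i) with hpNdef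
  set qN : (Fin n → X) → ℝ := fun x => ∏ i, q (x i) with hqNdef
  have hpNae : (fun x => (PP.rnDeriv N x).toReal) =ᵐ[N] pN := by
    have h1 : PP.rnDeriv N =ᵐ[N] (fun x => ∏ i, P.rnDeriv μ (x i)) := by
      rw [hPP]; exact Measure.rnDeriv_withDensity N hfNm
    filter_upwards [h1] with x hx
    rw [hx, ENNReal.toReal_prod]
  have hqNae : (fun x => (QQ.rnDeriv N x).toReal) =ᵐ[N] qN := by
    have h1 : QQ.rnDeriv N =ᵐ[N] (fun x : Fin n → X => ∏ i, Q.rnDeriv μ (x i)) := by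
      rw [hQQ]; exact Measure.rnDeriv_withDensity N hgNm
    filter_upwards [h1] with x hx
    rw [hx, ENNReal.toReal_prod]
  have keyP : ∀ A : Set (Fin n → X), (PP A).toReal = ∫ x in A, pN x ∂N := by
    intro A
    rw [← measureReal_def, ← Measure.setIntegral_toReal_rnDeriv hPPN A]
    exact integral_congr_ae (ae_restrict_of_ae hpNae)
  have keyQ : ∀ A : Set (Fin n → X), (QQ A).toReal = ∫ x in A, qN x ∂N := by
    intro A
    rw [← measureReal_def, ← Measure.setIntegral_toReal_rnDeriv hQQN A]
    exact integral_congr_ae (ae_restrict_of_ae hqNae)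
  have hipN : Integrable pN N := Measure.integrable_toReal_rnDeriv.congr hpNae
  have hiqN : Integrable qN N := Measure.integrable_toReal_rnDeriv.congr hqNae
  have hintpN : ∫ x, pN x ∂N = 1 := by
    have h := keyP Set.univ
    rw [setIntegral_univ] at h
    rw [← h]; simp
  have hintqN : ∫ x, qN x ∂N = 1 := by
    have h := keyQ Set.univ
    rw [setIntegral_univ] at h
    rw [← h]; simp
  -- product of r
  obtain ⟨hirN, hintrN⟩ := prod_integrable_and_integral μ n r hir
  rw [← hρdef] at hintrN
  -- the Hellinger affinity on the product space
  set gP : (Fin n → X) → ℝ := fun x => ∏ i, Real.sqrt (p (x i)) with hgPdef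
  set gQ : (Fin n → X) → ℝ := fun x => ∏ i, Real.sqrt (q (x i)) with hgQdef
  have hgPm : Measurable gP :=
    Finset.measurable_prod _ fun i _ =>
      Real.continuous_sqrt.measurable.comp (hpm.comp (measurable_pi_apply i))
  have hgQm : Measurable gQ :=
    Finset.measurable_prod _ fun i _ =>
      Real.continuous_sqrt.measurable.comp (hqm.comp (measurable_pi_apply i))
  have hgP0 : ∀ x, 0 ≤ gP x := fun x =>
    Finset.prod_nonneg fun i _ => Real.sqrt_nonneg _
  have hgQ0 : ∀ x, 0 ≤ gQ x := fun x =>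
    Finset.prod_nonneg fun i _ => Real.sqrt_nonneg _
  have hgPsq : ∀ x, gP x ^ 2 = pN x := by
    intro x
    rw [hgPdef, ← Finset.prod_pow]
    exact Finset.prod_congr rfl fun i _ => Real.sq_sqrt (hp0 _)
  have hgQsq : ∀ x, gQ x ^ 2 = qN x := by
    intro x
    rw [hgQdef, ← Finset.prod_pow]
    exact Finset.prod_congr rfl fun i _ => Real.sq_sqrt (hq0 _)
  have hgPgQ : ∀ x, gP x * gQ x = ∏ i, r (x i) := by
    intro x
    rw [hgPdef, hgQdef, ← Finset.prod_mul_distrib]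
  have higPgQ : Integrable (fun x => gP x * gQ x) N := by
    refine hirN.congr ?_
    exact Filter.Eventually.of_forall fun x => (hgPgQ x).symm
  have hintgPgQ : ∫ x, gP x * gQ x ∂N = ρ ^ n := by
    rw [integral_congr_ae (Filter.Eventually.of_forall hgPgQ), hintrN]
  -- Cauchy-Schwarz on the product space
  set F : (Fin n → X) → ℝ := fun x => |gQ x - gP x| with hFdef
  set G : (Fin n → X) → ℝ := fun x => gP x + gQ x with hGdef
  have hFm : Measurable F := (hgQm.sub hgPm).abs
  have hGm : Measurable G := hgPm.add hgQm
  have hF2eq : ∀ x, F x ^ 2 = qN x + pN x - 2 * (gP x * gQ x) := by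
    intro x
    rw [hFdef]
    simp only [sq_abs]
    rw [sub_sq, hgQsq, hgPsq]
    ring
  have hG2eq : ∀ x, G x ^ 2 = pN x + qN x + 2 * (gP x * gQ x) := by
    intro x
    rw [hGdef, add_sq, hgPsq, hgQsq]
    ring
  have hiF2 : Integrable (fun x => F x ^ 2) N := by
    refine (((hiqN.add hipN).sub (higPgQ.const_mul 2)).congr ?_)
    exact Filter.Eventually.of_forall fun x => (hF2eq x).symm
  have hiG2 : Integrable (fun x => G x ^ 2) N := by
    refine (((hipN.add hiqN).add (higPgQ.const_mul 2)).congr ?_)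
    exact Filter.Eventually.of_forall fun x => (hG2eq x).symm
  have hintF2 : ∫ x, F x ^ 2 ∂N = 2 - 2 * ρ ^ n := by
    rw [integral_congr_ae (Filter.Eventually.of_forall hF2eq),
      integral_sub (show Integrable (fun x => qN x + pN x) N from hiqN.add hipN)
        (show Integrable (fun x => 2 * (gP x * gQ x)) N from higPgQ.const_mul 2),
      integral_add hiqN hipN, integral_const_mul, hintpN, hintqN, hintgPgQ]
    ring
  have hintG2 : ∫ x, G x ^ 2 ∂N = 2 + 2 * ρ ^ n := by
    rw [integral_congr_ae (Filter.Eventually.of_forall hG2eq),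
      integral_add (show Integrable (fun x => pN x + qN x) N from hipN.add hiqN)
        (show Integrable (fun x => 2 * (gP x * gQ x)) N from higPgQ.const_mul 2),
      integral_add hipN hiqN, integral_const_mul, hintpN, hintqN, hintgPgQ]
    ring
  set D : (Fin n → X) → ℝ := fun x => qN x - pN x with hDdef
  have hiD : Integrable D N := hiqN.sub hipN
  have hintD : ∫ x, D x ∂N = 0 := by
    rw [hDdef]
    rw [integral_sub hiqN hipN, hintpN, hintqN]
    ring
  have hDabs : ∀ x, |D x| = F x * G x := by
    intro x
    show |qN x - pN x| = |gQ x - gP x| * (gP x + gQ x)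
    have h : qN x - pN x = (gQ x - gP x) * (gP x + gQ x) := by
      rw [← hgQsq, ← hgPsq]; ring
    rw [h, abs_mul, abs_of_nonneg (add_nonneg (hgP0 x) (hgQ0 x))]
  have habsD : ∫ x, |D x| ∂N ≤ Real.sqrt (2 - 2 * ρ ^ n) * 2 := by
    calc ∫ x, |D x| ∂N = ∫ x, F x * G x ∂N :=
          integral_congr_ae (Filter.Eventually.of_forall hDabs)
      _ ≤ Real.sqrt (∫ x, F x ^ 2 ∂N) * Real.sqrt (∫ x, G x ^ 2 ∂N) :=
          integral_mul_le_sqrt hFm.aestronglyMeasurable hGm.aestronglyMeasurable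
            (fun x => abs_nonneg _) (fun x => add_nonneg (hgP0 x) (hgQ0 x)) hiF2 hiG2
      _ ≤ Real.sqrt (2 - 2 * ρ ^ n) * 2 := by
          rw [hintF2, hintG2]
          gcongr
          refine (Real.sqrt_le_sqrt (by linarith : (2:ℝ) + 2 * ρ ^ n ≤ 4)).trans_eq ?_
          rw [show (4:ℝ) = 2 ^ 2 by norm_num, Real.sqrt_sq (by norm_num : (0:ℝ) ≤ 2)]
  -- the test set
  set A : Set (Fin n → X) := {x | φ x = true} with hAdef
  have hA : MeasurableSet A := hφ (measurableSet_singleton true)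
  have hAc : {x : Fin n → X | φ x = false} = Aᶜ := by
    ext x; simp [hAdef]
  have hsplit : (QQ A).toReal - (PP A).toReal ≤ (1/2) * ∫ x, |D x| ∂N := by
    have hq' := keyQ A
    have hp' := keyP A
    have hsum : ∫ x in A, D x ∂N + ∫ x in Aᶜ, D x ∂N = 0 := by
      rw [integral_add_compl hA hiD, hintD]
    have h1 : ∫ x in A, D x ∂N ≤ ∫ x in A, |D x| ∂N :=
      integral_mono hiD.restrict hiD.abs.restrict fun x => le_abs_self _
    have h2 : -∫ x in Aᶜ, D x ∂N ≤ ∫ x in Aᶜ, |D x| ∂N := by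
      rw [← integral_neg]
      exact integral_mono hiD.neg.restrict hiD.abs.restrict fun x => neg_le_abs _
    have h3 : ∫ x in A, |D x| ∂N + ∫ x in Aᶜ, |D x| ∂N = ∫ x, |D x| ∂N :=
      integral_add_compl hA hiD.abs
    have hQP : (QQ A).toReal - (PP A).toReal = ∫ x in A, D x ∂N := by
      rw [hq', hp', hDdef, ← integral_sub hiqN.restrict hipN.restrict]
    linarith
  -- Bernoulli: 1 - ρ^n ≤ n * (1 - ρ)
  have hbern : 1 - ρ ^ n ≤ n * (1 - ρ) := by
    have h := one_add_mul_le_pow (a := ρ - 1) (by linarith) n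
    have : 1 + ρ - 1 = ρ := by ring
    rw [show (1:ℝ) + (ρ - 1) = ρ by ring] at h
    nlinarith
  have hfinal : (QQ A).toReal - (PP A).toReal ≤
      Real.sqrt (2 * n) * hellingerDist' μ P Q := by
    rw [hhell]
    calc (QQ A).toReal - (PP A).toReal ≤ (1/2) * ∫ x, |D x| ∂N := hsplit
      _ ≤ (1/2) * (Real.sqrt (2 - 2 * ρ ^ n) * 2) := by linarith
      _ = Real.sqrt (2 - 2 * ρ ^ n) := by ring
      _ ≤ Real.sqrt (2 * n * (1 - ρ)) := Real.sqrt_le_sqrt (by nlinarith)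
      _ = Real.sqrt (2 * n) * Real.sqrt (1 - ρ) := Real.sqrt_mul (by positivity) _
  -- finish
  have hQc : (QQ Aᶜ).toReal = 1 - (QQ A).toReal := by
    rw [prob_compl_eq_one_sub hA, ENNReal.toReal_sub_of_le prob_le_one ENNReal.one_ne_top,
      ENNReal.toReal_one]
  rw [hAc, hQc]
  linarith
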